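/- Translations are linearly represented by the translator versor T = 1 + ½ t e∞ in conformal geometric algebra: for all x, t ∈ ℝ³ (vectors of ℝ³ embedded in V as (·,0,0)), in the Clifford algebra Cl(4,1) one has (1 - ½ • (ι(t) * ι(e∞))) * ι(C(x)) * (1 + ½ • (ι(t) * ι(e∞))) = ι(C(x + t)). -/

import Mathlib

open scoped RealInnerProductSpace

/-- The vector space of the conformal model: `ℝ³ × ℝ × ℝ`,
with elements `(v, α, β)`. -/
abbrev ConfV : Type := (EuclideanSpace ℝ (Fin 3)) × ℝ × ℝ

/-- The companion bilinear form of the conformal quadratic form. -/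
noncomputable def confB : LinearMap.BilinForm ℝ ConfV :=
  LinearMap.mk₂ ℝ
    (fun x y => 2 * ⟪x.1, y.1⟫ - 2 * (x.2.1 * y.2.2 + x.2.2 * y.2.1))
    (fun x x' y => by
      simp only [Prod.fst_add, Prod.snd_add, inner_add_left]; ring)
    (fun a x y => by
      simp only [Prod.smul_fst, Prod.smul_snd, real_inner_smul_left, smul_eq_mul]; ring)
    (fun x y y' => by
      simp only [Prod.fst_add, Prod.snd_add, inner_add_right]; ring)
    (fun a x y => by
      simp only [Prod.smul_fst, Prod.smul_snd, real_inner_smul_right, smul_eq_mul]; ring)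

/-- The conformal quadratic form `Q (v, α, β) = ‖v‖² - 2αβ` of signature `(4,1)`. -/
noncomputable def Qc : QuadraticForm ℝ ConfV where
  toFun x := ‖x.1‖ ^ 2 - 2 * x.2.1 * x.2.2
  toFun_smul a x := by
    simp only [Prod.smul_fst, Prod.smul_snd, norm_smul, mul_pow, Real.norm_eq_abs, sq_abs,
      smul_eq_mul]
    ring
  exists_companion' :=
    ⟨confB, fun x y => by
      simp only [confB, LinearMap.mk₂_apply, Prod.fst_add, Prod.snd_add, norm_add_sq_real]
      ring⟩

/-- The null vector representing the origin. -/
noncomputable def e₀ : ConfV := (0, 1, 0)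

/-- The null vector representing infinity. -/
noncomputable def eInf : ConfV := (0, 0, 1)

/-- The symmetric bilinear form associated to `Qc`. -/
noncomputable def Bc (x y : ConfV) : ℝ := (Qc (x + y) - Qc x - Qc y) / 2

/-- The conformal embedding `C x = x + ½‖x‖² e∞ + e₀`. -/
noncomputable def confC (x : EuclideanSpace ℝ (Fin 3)) : ConfV := (x, 1, ‖x‖ ^ 2 / 2)

/-- The canonical embedding into the conformal geometric algebra `Cl(4,1)`. -/
noncomputable def ιc : ConfV →ₗ[ℝ] CliffordAlgebra Qc :=
  CliffordAlgebra.ι Qc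

/-
The bivector `B = t e∞` squares to zero because `e∞` is null and orthogonal to `t`, so the sandwich
by `1 ∓ ½B` expands to `c - ½[B, c] - ¼ B c B`. Both correction terms are vectors: `[B, c]` is a
combination of `t` and `e∞`, and `B c B` is a multiple of `e∞`. For `c = C(x)` they add up to
`C(x + t) - C(x) = t + (⟪x, t⟫ + ½‖t‖²) e∞`.
-/

theorem one_sub_smul_mul_mul_one_add_smul {R A : Type*} [CommRing R] [Ring A] [Algebra R A]
    (s : R) (b c : A) :
    (1 - s • b) * c * (1 + s • b) = c - s • (b * c - c * b) - s ^ 2 • (b * c * b) := by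
  simp only [sub_mul, one_mul, mul_add, mul_one, smul_mul_assoc, mul_smul_comm, mul_assoc]
  module

namespace CliffordAlgebra

variable {R M : Type*} [CommRing R] [AddCommGroup M] [Module R M] {Q : QuadraticForm R M}

open QuadraticMap

theorem ι_mul_ι_mul_ι_sub_ι_mul_ι_mul_ι (a n c : M) :
    ι Q a * ι Q n * ι Q c - ι Q c * (ι Q a * ι Q n) =
      ι Q (polar Q n c • a - polar Q a c • n) := by
  rw [mul_assoc, ι_mul_ι_comm n c, mul_sub, ← mul_assoc (ι Q a) (ι Q c), ι_mul_ι_comm a c,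
    map_sub, map_smul, map_smul, Algebra.smul_def, Algebra.smul_def, Algebra.commutes]
  noncomm_ring

variable {a n : M}

theorem ι_mul_ι_mul_ι_eq_zero_of_isOrtho (hn : Q n = 0) (han : Q.IsOrtho a n) :
    ι Q n * ι Q a * ι Q n = 0 := by
  rw [ι_mul_ι_mul_ι, han.symm.polar_eq_zero, hn, zero_smul, zero_smul, sub_zero, map_zero]

theorem ι_mul_ι_mul_self_of_isOrtho (hn : Q n = 0) (han : Q.IsOrtho a n) :
    ι Q a * ι Q n * (ι Q a * ι Q n) = 0 := by
  rw [mul_assoc, ← mul_assoc (ι Q n), ι_mul_ι_mul_ι_eq_zero_of_isOrtho hn han, mul_zero]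

theorem ι_mul_ι_mul_ι_mul_ι_mul_ι_of_isOrtho (hn : Q n = 0) (han : Q.IsOrtho a n) (c : M) :
    ι Q a * ι Q n * ι Q c * (ι Q a * ι Q n) = (polar Q n c * Q a) • ι Q n := by
  have hcomm := ι_mul_ι_mul_ι_sub_ι_mul_ι_mul_ι (Q := Q) a n c
  rw [sub_eq_iff_eq_add'] at hcomm
  rw [hcomm, add_mul, mul_assoc, ι_mul_ι_mul_self_of_isOrtho hn han, mul_zero, zero_add,
    map_sub, map_smul, map_smul, sub_mul, smul_mul_assoc, smul_mul_assoc,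
    ← mul_assoc (ι Q n), ι_mul_ι_mul_ι_eq_zero_of_isOrtho hn han, ← mul_assoc, ι_sq_scalar,
    ← Algebra.smul_def, smul_zero, sub_zero, smul_smul]

theorem one_sub_smul_ι_mul_ι_mul_ι_mul_one_add_smul_ι_mul_ι (hn : Q n = 0)
    (han : Q.IsOrtho a n) (s : R) (c : M) :
    (1 - s • (ι Q a * ι Q n)) * ι Q c * (1 + s • (ι Q a * ι Q n)) =
      ι Q (c - (s * polar Q n c) • a + (s * polar Q a c - s ^ 2 * (polar Q n c * Q a)) • n) := by
  rw [one_sub_smul_mul_mul_one_add_smul, ι_mul_ι_mul_ι_sub_ι_mul_ι_mul_ι,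
    ι_mul_ι_mul_ι_mul_ι_mul_ι_of_isOrtho hn han]
  simp only [map_add, map_sub, map_smul]
  module

end CliffordAlgebra

lemma Qc_apply (v : ConfV) : Qc v = ‖v.1‖ ^ 2 - 2 * v.2.1 * v.2.2 := rfl

lemma polar_Qc (u v : ConfV) :
    QuadraticMap.polar Qc u v = 2 * ⟪u.1, v.1⟫ - 2 * (u.2.1 * v.2.2 + u.2.2 * v.2.1) := by
  simp only [QuadraticMap.polar, Qc_apply, Prod.fst_add, Prod.snd_add, norm_add_sq_real]
  ring

lemma Qc_eInf : Qc eInf = 0 := by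
  simp [Qc_apply, eInf]

lemma isOrtho_Qc_eInf (t : EuclideanSpace ℝ (Fin 3)) : Qc.IsOrtho (t, 0, 0) eInf := by
  rw [← QuadraticMap.isOrtho_polarBilin, QuadraticMap.polarBilin_apply_apply, polar_Qc]
  simp [eInf]

theorem translator_versor_translates (x t : EuclideanSpace ℝ (Fin 3)) :
    (1 - (1 / 2 : ℝ) • (ιc (t, 0, 0) * ιc eInf)) * ιc (confC x) *
        (1 + (1 / 2 : ℝ) • (ιc (t, 0, 0) * ιc eInf)) =
      ιc (confC (x + t)) := by
  rw [ιc, CliffordAlgebra.one_sub_smul_ι_mul_ι_mul_ι_mul_one_add_smul_ι_mul_ι Qc_eInf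
    (isOrtho_Qc_eInf t)]
  congr 1
  simp only [polar_Qc, Qc_apply, confC, eInf, inner_zero_left]
  ext
  · simp
  · simp
  · simp [norm_add_sq_real, real_inner_comm]
    ring
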